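/- Define K_{m,p}(π) = inf over triangles T of unit area of ‖π − I_T π‖_{L^p(T)}, for π ∈ H_m. Then for any invertible linear map φ, K_{m,p}(π∘φ) = |det φ|^{m/2} K_{m,p}(π). -/

import Mathlib

open MeasureTheory

noncomputable section

/-- evaluation of the binary form of degree `m` with coefficients `a` -/
def formEval (m : ℕ) (a : Fin (m + 1) → ℝ) (z : ℝ × ℝ) : ℝ :=
  ∑ i : Fin (m + 1), a i * z.1 ^ (i : ℕ) * z.2 ^ (m - (i : ℕ))

/-- `π` is a binary homogeneous form of degree `m` (an element of H_m) -/
def IsForm (m : ℕ) (π : ℝ × ℝ → ℝ) : Prop :=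
  ∃ a : Fin (m + 1) → ℝ, ∀ z, π z = formEval m a z

/-- `p` is (the evaluation of) a polynomial of total degree at most `n` -/
def IsPolyDeg (n : ℕ) (p : ℝ × ℝ → ℝ) : Prop :=
  ∃ q : MvPolynomial (Fin 2) ℝ, q.totalDegree ≤ n ∧
    ∀ z : ℝ × ℝ, p z = MvPolynomial.eval ![z.1, z.2] q

/-- the Lagrange interpolation nodes of degree `m - 1` on the triangle with vertices
`T 0, T 1, T 2`: the points whose barycentric coordinates lie in {0, 1/(m−1), …, 1} -/
def interpNodes (m : ℕ) (T : Fin 3 → ℝ × ℝ) : Set (ℝ × ℝ) :=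
  { z | ∃ k : Fin 3 → ℕ, (∑ i, k i) = m - 1 ∧
      z = ∑ i, ((k i : ℝ) / ((m : ℝ) - 1)) • T i }

/-- `p` is the degree `m - 1` Lagrange interpolant of `v` on the triangle `T` -/
def IsInterpolant (m : ℕ) (T : Fin 3 → ℝ × ℝ) (v p : ℝ × ℝ → ℝ) : Prop :=
  IsPolyDeg (m - 1) p ∧ ∀ z ∈ interpNodes m T, p z = v z

/-- the Lagrange interpolation operator `I_{m,T}` of degree `m - 1` on the triangle `T` -/
def interp (m : ℕ) (T : Fin 3 → ℝ × ℝ) (v : ℝ × ℝ → ℝ) : ℝ × ℝ → ℝ := by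
  classical exact if h : ∃ p, IsInterpolant m T v p then h.choose else 0

/-- the (closed) triangle with vertices `T 0, T 1, T 2` -/
def triangleSet (T : Fin 3 → ℝ × ℝ) : Set (ℝ × ℝ) := convexHull ℝ (Set.range T)

/-- the area of the triangle with vertices `T 0, T 1, T 2` -/
def triArea (T : Fin 3 → ℝ × ℝ) : ℝ :=
  |((T 1).1 - (T 0).1) * ((T 2).2 - (T 0).2) -
    ((T 2).1 - (T 0).1) * ((T 1).2 - (T 0).2)| / 2

/-- the interpolation error `‖v − I_{m,T} v‖_{L^p(T)}` -/
def lpErr (m : ℕ) (p : ℝ) (T : Fin 3 → ℝ × ℝ) (v : ℝ × ℝ → ℝ) : ℝ :=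
  (∫ z in triangleSet T, |v z - interp m T v z| ^ p) ^ (1 / p)

/-- the interpolation error `‖v − I_{m,T} v‖_{L^∞(T)}` -/
def supErr (m : ℕ) (T : Fin 3 → ℝ × ℝ) (v : ℝ × ℝ → ℝ) : ℝ :=
  sSup ((fun z => |v z - interp m T v z|) '' triangleSet T)

/-- the shape function `K_{m,p}(π) = inf_{|T|=1} ‖π − I_{m,T} π‖_{L^p(T)}` -/
def Kfun (m : ℕ) (p : ℝ) (π : ℝ × ℝ → ℝ) : ℝ :=
  sInf { e | ∃ T : Fin 3 → ℝ × ℝ, triArea T = 1 ∧ e = lpErr m p T π }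

/-!
Put `ψ = |det φ|^{-1/2} φ`, so that `|det ψ| = 1` and, by `m`-homogeneity,
`π ∘ φ = |det φ|^{m/2} (π ∘ ψ)`. Both the scalar and `ψ` can be pulled out of `K`: on a triangle
of nonzero area the interpolant is unique, hence commutes with scalars and with linear changes of
variables, `I_T (v ∘ ψ) = (I_{ψ T} v) ∘ ψ`; the change of variables formula then identifies the
error of `v ∘ ψ` on `T` with that of `v` on `ψ T`, and `T ↦ ψ T` permutes the unit-area triangles.

Uniqueness reduces, through the affine map `(s, t) ↦ T₀ + s (T₁ - T₀) + t (T₂ - T₀)`, to the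
fact that a polynomial of degree `≤ d` vanishing on `{(i/d, j/d) : i + j ≤ d}` is zero: it vanishes
on the `d + 1` nodes of the line `s = 0`, so `s` divides it, and the quotient has degree `≤ d - 1`
and vanishes on the remaining nodes.
-/

namespace MvPolynomial

variable {K : Type*} [Field K]

theorem eval_eval_C_finSuccEquiv (q : MvPolynomial (Fin 2) K) (a b : K) :
    eval ![b] ((finSuccEquiv K 1 q).eval (C a)) = eval ![a, b] q := by
  rw [← Polynomial.eval₂_at_apply, eval_C, ← Polynomial.eval_map]
  exact (eval_eq_eval_mv_eval' ![b] a q).symm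

theorem totalDegree_eval_C_finSuccEquiv_le (q : MvPolynomial (Fin 2) K) (a : K) :
    ((finSuccEquiv K 1 q).eval (C a)).totalDegree ≤ q.totalDegree := by
  rw [Polynomial.eval_eq_sum_range]
  refine totalDegree_finsetSum_le fun k _ => ?_
  by_cases hk : (finSuccEquiv K 1 q).coeff k = 0
  · simp [hk]
  calc _ ≤ ((finSuccEquiv K 1 q).coeff k).totalDegree + (C a ^ k).totalDegree :=
        totalDegree_mul _ _
    _ ≤ ((finSuccEquiv K 1 q).coeff k).totalDegree + k := by
        rw [← C_pow, totalDegree_C]; omega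
    _ ≤ q.totalDegree := totalDegree_coeff_finSuccEquiv_add_le q k hk

theorem eq_zero_of_totalDegree_le_of_eval_eq_zero (s : MvPolynomial (Fin 1) K) (d : ℕ)
    (hs : s.totalDegree ≤ d) (y : ℕ → K) (hy : Set.InjOn y (Set.Iic d))
    (h : ∀ j ≤ d, eval ![y j] s = 0) : s = 0 := by
  classical
  refine eq_zero_of_eval_zero_at_prod_finset s (fun _ => (Finset.Iic d).image y)
    (fun i => ?_) (fun w hw => ?_)
  · rw [Finset.card_image_of_injOn (by simpa using hy), Nat.card_Iic]
    exact Nat.lt_succ_of_le ((degreeOf_le_totalDegree s i).trans hs)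
  · obtain ⟨j, hj, hwj⟩ := Finset.mem_image.mp (hw 0)
    rw [show w = ![y j] by ext i; fin_cases i; exact hwj.symm]
    exact h j (Finset.mem_Iic.mp hj)

theorem X_zero_sub_C_dvd_of_eval_eq_zero (q : MvPolynomial (Fin 2) K) (a : K) (d : ℕ)
    (hq : q.totalDegree ≤ d) (y : ℕ → K) (hy : Set.InjOn y (Set.Iic d)) (h : ∀ j ≤ d, eval ![a, y j] q = 0) :
    X 0 - C a ∣ q := by
  have hroot : (finSuccEquiv K 1 q).IsRoot (C a) :=
    eq_zero_of_totalDegree_le_of_eval_eq_zero _ d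
      ((totalDegree_eval_C_finSuccEquiv_le q a).trans hq) y hy
      fun j hj => (eval_eval_C_finSuccEquiv q a (y j)).trans (h j hj)
  obtain ⟨r, hr⟩ := Polynomial.dvd_iff_isRoot.mpr hroot
  refine ⟨(finSuccEquiv K 1).symm r, (finSuccEquiv K 1).injective ?_⟩
  rw [map_mul, AlgEquiv.apply_symm_apply, map_sub, finSuccEquiv_X_zero, ← algebraMap_eq,
    AlgEquiv.commutes, hr, Polynomial.algebraMap_apply, algebraMap_eq]

theorem eq_zero_of_eval_triangle_eq_zero (d : ℕ) (q : MvPolynomial (Fin 2) K)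
    (hq : q.totalDegree ≤ d) (x y : ℕ → K) (hx : Set.InjOn x (Set.Iic d))
    (hy : Set.InjOn y (Set.Iic d)) (h : ∀ i j, i + j ≤ d → eval ![x i, y j] q = 0) :
    q = 0 := by
  induction d generalizing q x with
  | zero =>
    rw [totalDegree_eq_zero_iff_eq_C.mp (Nat.le_zero.mp hq)] at h ⊢
    simpa using h 0 0 le_rfl
  | succ d ih =>
    obtain ⟨r, rfl⟩ :=
      X_zero_sub_C_dvd_of_eval_eq_zero q (x 0) (d + 1) hq y hy fun j hj => h 0 j (by omega)
    suffices r = 0 by rw [this, mul_zero]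
    by_contra hr
    have hXdeg : (X 0 - C (x 0) : MvPolynomial (Fin 2) K).totalDegree = 1 := by
      rw [sub_eq_add_neg, ← C_neg, totalDegree_add_eq_left_of_totalDegree_lt] <;>
        simp [totalDegree_X]
    have hX : (X 0 - C (x 0) : MvPolynomial (Fin 2) K) ≠ 0 := by
      rintro h0; simp [h0] at hXdeg
    refine hr (ih r ?_ (fun i => x (i + 1)) ?_ (hy.mono ?_) fun i j hij => ?_)
    · rw [totalDegree_mul_of_isDomain hX hr, hXdeg] at hq
      omega
    · exact hx.comp (add_left_injective 1).injOn fun i hi => by simpa using hi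
    · exact Set.Iic_subset_Iic.mpr d.le_succ
    · have hne : x (i + 1) - x 0 ≠ 0 := sub_ne_zero.mpr
        (hx.ne (Set.mem_Iic.mpr (by omega)) (Set.mem_Iic.mpr (by omega)) i.succ_ne_zero)
      simpa [hne] using h (i + 1) j (by omega)

theorem totalDegree_bind₁_le {σ τ R : Type*} [CommSemiring R] (g : σ → MvPolynomial τ R)
    (hg : ∀ i, (g i).totalDegree ≤ 1) (q : MvPolynomial σ R) :
    (bind₁ g q).totalDegree ≤ q.totalDegree := by
  rw [← aeval_eq_bind₁, aeval_def, eval₂_eq]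
  refine totalDegree_finsetSum_le fun d hd => ?_
  calc _ ≤ (algebraMap R (MvPolynomial τ R) (q.coeff d)).totalDegree
          + (∏ i ∈ d.support, g i ^ d i).totalDegree := totalDegree_mul _ _
    _ ≤ 0 + ∑ i ∈ d.support, d i * 1 := by
        rw [algebraMap_eq, totalDegree_C]
        refine Nat.add_le_add_left ((totalDegree_finsetProd _ _).trans
          (Finset.sum_le_sum fun i _ => (totalDegree_pow _ _).trans ?_)) _
        exact Nat.mul_le_mul_left _ (hg i)
    _ ≤ q.totalDegree := by simpa [Finsupp.sum] using le_totalDegree hd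

end MvPolynomial

theorem LinearMap.det_prod_eq (Ψ : (ℝ × ℝ) →ₗ[ℝ] ℝ × ℝ) :
    LinearMap.det Ψ = (Ψ (1, 0)).1 * (Ψ (0, 1)).2 - (Ψ (0, 1)).1 * (Ψ (1, 0)).2 := by
  rw [← LinearMap.det_toMatrix (Module.Basis.finTwoProd ℝ) Ψ, Matrix.det_fin_two]
  simp [LinearMap.toMatrix_apply]

theorem LinearMap.apply_prod_eq (L : (ℝ × ℝ) →ₗ[ℝ] ℝ × ℝ) (z : ℝ × ℝ) :
    L z = z.1 • L (1, 0) + z.2 • L (0, 1) := by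
  rw [← map_smul, ← map_smul, ← map_add]
  congr 1
  ext <;> simp

/-- The linear part of the affine map sending the reference triangle `(0, e₁, e₂)` onto `T`. -/
def edgeMap (T : Fin 3 → ℝ × ℝ) : (ℝ × ℝ) →ₗ[ℝ] ℝ × ℝ :=
  (LinearMap.fst ℝ ℝ ℝ).smulRight (T 1 - T 0) + (LinearMap.snd ℝ ℝ ℝ).smulRight (T 2 - T 0)

theorem edgeMap_apply (T : Fin 3 → ℝ × ℝ) (z : ℝ × ℝ) :
    edgeMap T z = z.1 • (T 1 - T 0) + z.2 • (T 2 - T 0) := rfl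

theorem triArea_eq_abs_det_edgeMap (T : Fin 3 → ℝ × ℝ) :
    triArea T = |LinearMap.det (edgeMap T)| / 2 := by
  rw [LinearMap.det_prod_eq, triArea]
  simp [edgeMap_apply]

theorem edgeMap_comp (Ψ : (ℝ × ℝ) →ₗ[ℝ] ℝ × ℝ) (T : Fin 3 → ℝ × ℝ) :
    edgeMap (fun i => Ψ (T i)) = Ψ ∘ₗ edgeMap T := by
  ext <;> simp [edgeMap_apply, map_sub]

theorem triArea_comp (Ψ : (ℝ × ℝ) →ₗ[ℝ] ℝ × ℝ) (T : Fin 3 → ℝ × ℝ) :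
    triArea (fun i => Ψ (T i)) = |LinearMap.det Ψ| * triArea T := by
  rw [triArea_eq_abs_det_edgeMap, triArea_eq_abs_det_edgeMap, edgeMap_comp, LinearMap.det_comp,
    abs_mul, mul_div_assoc]

theorem edgeMap_surjective {T : Fin 3 → ℝ × ℝ} (hT : triArea T ≠ 0) :
    Function.Surjective (edgeMap T) := by
  have hdet : LinearMap.det (edgeMap T) ≠ 0 := fun h => hT (by
    rw [triArea_eq_abs_det_edgeMap, h]; simp)
  exact (LinearMap.equivOfDetNeZero _ hdet).surjective

theorem IsPolyDeg.sub {n : ℕ} {f g : ℝ × ℝ → ℝ} (hf : IsPolyDeg n f) (hg : IsPolyDeg n g) :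
    IsPolyDeg n (fun z => f z - g z) := by
  obtain ⟨q, hqn, hq⟩ := hf
  obtain ⟨r, hrn, hr⟩ := hg
  exact ⟨q - r, (MvPolynomial.totalDegree_sub q r).trans (max_le hqn hrn), by simp [hq, hr]⟩

theorem IsPolyDeg.const_mul {n : ℕ} {f : ℝ × ℝ → ℝ} (hf : IsPolyDeg n f) (c : ℝ) :
    IsPolyDeg n (fun z => c * f z) := by
  obtain ⟨q, hqn, hq⟩ := hf
  refine ⟨MvPolynomial.C c * q, ?_, by simp [hq]⟩
  exact (MvPolynomial.totalDegree_mul _ _).trans (by simpa using hqn)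

open MvPolynomial in
theorem IsPolyDeg.comp_add_linearMap {n : ℕ} {f : ℝ × ℝ → ℝ} (hf : IsPolyDeg n f)
    (a : ℝ × ℝ) (L : (ℝ × ℝ) →ₗ[ℝ] ℝ × ℝ) : IsPolyDeg n (fun z => f (a + L z)) := by
  obtain ⟨q, hqn, hq⟩ := hf
  let g : Fin 2 → MvPolynomial (Fin 2) ℝ :=
    ![C a.1 + C (L (1, 0)).1 * X 0 + C (L (0, 1)).1 * X 1,
      C a.2 + C (L (1, 0)).2 * X 0 + C (L (0, 1)).2 * X 1]
  have hg : ∀ i, (g i).totalDegree ≤ 1 := by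
    have hCX : ∀ (c : ℝ) (j : Fin 2), (C c * X j : MvPolynomial (Fin 2) ℝ).totalDegree ≤ 1 :=
      fun c j => (totalDegree_mul _ _).trans (by simp [totalDegree_X])
    intro i
    fin_cases i <;> exact (totalDegree_add _ _).trans
      (max_le ((totalDegree_add _ _).trans (max_le (by simp) (hCX _ _))) (hCX _ _))
  refine ⟨bind₁ g q, (totalDegree_bind₁_le g hg q).trans hqn, fun z => (hq _).trans ?_⟩
  refine Eq.trans ?_ (eval₂Hom_bind₁ (RingHom.id ℝ) ![z.1, z.2] g q).symm
  refine congrArg (fun w => eval w q) (funext fun i => ?_)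
  rw [L.apply_prod_eq z]
  fin_cases i <;> simp [g] <;> ring

theorem add_edgeMap_mem_interpNodes {m : ℕ} (hm : 2 ≤ m) (T : Fin 3 → ℝ × ℝ) {i j : ℕ}
    (hij : i + j ≤ m - 1) :
    T 0 + edgeMap T ((i : ℝ) / ((m : ℝ) - 1), (j : ℝ) / ((m : ℝ) - 1)) ∈ interpNodes m T := by
  have hm1 : (m : ℝ) - 1 ≠ 0 := by
    have : (2 : ℝ) ≤ m := by exact_mod_cast hm
    linarith
  refine ⟨![m - 1 - i - j, i, j], by simp [Fin.sum_univ_three]; omega, ?_⟩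
  have hk : ((m - 1 - i - j : ℕ) : ℝ) = (m : ℝ) - 1 - i - j := by
    rw [Nat.cast_sub (by omega), Nat.cast_sub (by omega), Nat.cast_sub (by omega)]
    simp
  simp only [Fin.sum_univ_three, edgeMap_apply, Matrix.cons_val_zero, Matrix.cons_val_one,
    Matrix.cons_val_two, Matrix.head_cons, Matrix.tail_cons, hk]
  ext <;> simp <;> field_simp <;> ring

theorem IsInterpolant.unique {m : ℕ} (hm : 2 ≤ m) {T : Fin 3 → ℝ × ℝ} (hT : triArea T ≠ 0)
    {v p₁ p₂ : ℝ × ℝ → ℝ} (h₁ : IsInterpolant m T v p₁) (h₂ : IsInterpolant m T v p₂) :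
    p₁ = p₂ := by
  obtain ⟨q, hqd, hq⟩ := (h₁.1.sub h₂.1).comp_add_linearMap (T 0) (edgeMap T)
  set x : ℕ → ℝ := fun i => (i : ℝ) / ((m : ℝ) - 1)
  have hx : Set.InjOn x (Set.Iic (m - 1)) := by
    have hm1 : (m : ℝ) - 1 ≠ 0 := by
      have : (2 : ℝ) ≤ m := by exact_mod_cast hm
      linarith
    exact fun i _ j _ hij => by exact_mod_cast (div_left_inj' hm1).mp hij
  have hgrid : ∀ i j, i + j ≤ m - 1 → MvPolynomial.eval ![x i, x j] q = 0 := by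
    intro i j hij
    have hz := add_edgeMap_mem_interpNodes hm T hij
    exact (hq (x i, x j)).symm.trans (sub_eq_zero.mpr ((h₁.2 _ hz).trans (h₂.2 _ hz).symm))
  have hq0 := MvPolynomial.eq_zero_of_eval_triangle_eq_zero (m - 1) q hqd x x hx hx hgrid
  funext w
  obtain ⟨z, hz⟩ := edgeMap_surjective hT (w - T 0)
  simpa [hq0, hz, sub_eq_zero] using hq z

theorem isInterpolant_interp {m : ℕ} {T : Fin 3 → ℝ × ℝ} {v : ℝ × ℝ → ℝ}
    (h : ∃ p, IsInterpolant m T v p) : IsInterpolant m T v (interp m T v) := by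
  rw [interp, dif_pos h]
  exact h.choose_spec

theorem interp_of_not_exists {m : ℕ} {T : Fin 3 → ℝ × ℝ} {v : ℝ × ℝ → ℝ}
    (h : ¬∃ p, IsInterpolant m T v p) : interp m T v = 0 := by
  rw [interp, dif_neg h]

theorem interp_eq {m : ℕ} (hm : 2 ≤ m) {T : Fin 3 → ℝ × ℝ} (hT : triArea T ≠ 0)
    {v p : ℝ × ℝ → ℝ} (h : IsInterpolant m T v p) : interp m T v = p :=
  (isInterpolant_interp ⟨p, h⟩).unique hm hT h

theorem IsInterpolant.comp_linearMap {m : ℕ} {T : Fin 3 → ℝ × ℝ} {v p : ℝ × ℝ → ℝ}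
    (Ψ : (ℝ × ℝ) →ₗ[ℝ] ℝ × ℝ) (h : IsInterpolant m (fun i => Ψ (T i)) v p) :
    IsInterpolant m T (fun z => v (Ψ z)) (fun z => p (Ψ z)) := by
  refine ⟨by simpa using h.1.comp_add_linearMap 0 Ψ, fun z ⟨k, hk, hz⟩ => h.2 _ ⟨k, hk, ?_⟩⟩
  simp [hz, map_sum, map_smul]

theorem IsInterpolant.const_mul {m : ℕ} {T : Fin 3 → ℝ × ℝ} {v p : ℝ × ℝ → ℝ}
    (h : IsInterpolant m T v p) (c : ℝ) :
    IsInterpolant m T (fun z => c * v z) (fun z => c * p z) :=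
  ⟨h.1.const_mul c, fun z hz => congrArg (c * ·) (h.2 z hz)⟩

theorem interp_comp_linearEquiv {m : ℕ} (hm : 2 ≤ m) {T : Fin 3 → ℝ × ℝ} (hT : triArea T ≠ 0)
    (Ψ : (ℝ × ℝ) ≃ₗ[ℝ] ℝ × ℝ) (v : ℝ × ℝ → ℝ) :
    interp m T (fun z => v (Ψ z)) = fun z => interp m (fun i => Ψ (T i)) v (Ψ z) := by
  by_cases h : ∃ p, IsInterpolant m (fun i => Ψ (T i)) v p
  · exact interp_eq hm hT ((isInterpolant_interp h).comp_linearMap (Ψ : (ℝ × ℝ) →ₗ[ℝ] ℝ × ℝ))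
  · have h' : ¬∃ p, IsInterpolant m T (fun z => v (Ψ z)) p := fun ⟨p, hp⟩ =>
      h ⟨fun z => p (Ψ.symm z), by
        simpa using IsInterpolant.comp_linearMap (T := fun i => Ψ (T i)) (v := fun z => v (Ψ z))
          (Ψ.symm : (ℝ × ℝ) →ₗ[ℝ] ℝ × ℝ) (by simpa using hp)⟩
    rw [interp_of_not_exists h, interp_of_not_exists h']
    rfl

theorem interp_const_mul {m : ℕ} (hm : 2 ≤ m) {T : Fin 3 → ℝ × ℝ} (hT : triArea T ≠ 0)
    {c : ℝ} (hc : c ≠ 0) (v : ℝ × ℝ → ℝ) :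
    interp m T (fun z => c * v z) = fun z => c * interp m T v z := by
  by_cases h : ∃ p, IsInterpolant m T v p
  · exact interp_eq hm hT ((isInterpolant_interp h).const_mul c)
  · have h' : ¬∃ p, IsInterpolant m T (fun z => c * v z) p := fun ⟨p, hp⟩ =>
      h ⟨fun z => c⁻¹ * p z, by simpa [hc] using hp.const_mul c⁻¹⟩
    rw [interp_of_not_exists h, interp_of_not_exists h']
    ext
    simp

theorem measurableSet_triangleSet (T : Fin 3 → ℝ × ℝ) : MeasurableSet (triangleSet T) :=
  ((Set.finite_range T).isCompact_convexHull (𝕜 := ℝ)).isClosed.measurableSet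

theorem image_triangleSet (Ψ : (ℝ × ℝ) →ₗ[ℝ] ℝ × ℝ) (T : Fin 3 → ℝ × ℝ) :
    Ψ '' triangleSet T = triangleSet (fun i => Ψ (T i)) := by
  rw [triangleSet, triangleSet, Ψ.image_convexHull, ← Set.range_comp]
  rfl

theorem setIntegral_comp_linearEquiv {E : Type*} [NormedAddCommGroup E] [NormedSpace ℝ E]
    [FiniteDimensional ℝ E] [MeasurableSpace E] [BorelSpace E] (μ : Measure E)
    [μ.IsAddHaarMeasure] (Ψ : E ≃ₗ[ℝ] E) {s : Set E} (hs : MeasurableSet s) (g : E → ℝ) :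
    ∫ z in s, g (Ψ z) ∂μ = |LinearMap.det (Ψ : E →ₗ[ℝ] E)|⁻¹ * ∫ z in Ψ '' s, g z ∂μ := by
  have hdet : LinearMap.det (Ψ : E →ₗ[ℝ] E) ≠ 0 := Ψ.isUnit_det'.ne_zero
  rw [integral_image_eq_integral_abs_det_fderiv_smul μ hs (f := Ψ)
    (f' := fun _ => (Ψ.toContinuousLinearEquiv : E →L[ℝ] E))
    (fun z _ => Ψ.toContinuousLinearEquiv.hasFDerivAt.hasFDerivWithinAt) Ψ.injective.injOn g]
  simp [integral_const_mul, ContinuousLinearMap.det, hdet]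

theorem lpErr_comp_linearEquiv {m : ℕ} (hm : 2 ≤ m) {p : ℝ} {T : Fin 3 → ℝ × ℝ}
    (hT : triArea T ≠ 0) (Ψ : (ℝ × ℝ) ≃ₗ[ℝ] ℝ × ℝ) (v : ℝ × ℝ → ℝ) :
    lpErr m p T (fun z => v (Ψ z)) =
      |LinearMap.det (Ψ : (ℝ × ℝ) →ₗ[ℝ] ℝ × ℝ)|⁻¹ ^ (1 / p) * lpErr m p (fun i => Ψ (T i)) v := by
  rw [lpErr, lpErr, interp_comp_linearEquiv hm hT Ψ v,
    setIntegral_comp_linearEquiv volume Ψ (measurableSet_triangleSet T)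
      (fun w => |v w - interp m (fun i => Ψ (T i)) v w| ^ p),
    ← LinearEquiv.coe_coe, image_triangleSet,
    Real.mul_rpow (by positivity) (integral_nonneg fun _ => by positivity)]

theorem lpErr_const_mul {m : ℕ} (hm : 2 ≤ m) {p : ℝ} (hp : p ≠ 0) {T : Fin 3 → ℝ × ℝ}
    (hT : triArea T ≠ 0) {c : ℝ} (hc : c ≠ 0) (v : ℝ × ℝ → ℝ) :
    lpErr m p T (fun z => c * v z) = |c| * lpErr m p T v := by
  have hmul : ∀ z, |c * v z - c * interp m T v z| ^ p = |c| ^ p * |v z - interp m T v z| ^ p :=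
    fun z => by rw [← mul_sub, abs_mul, Real.mul_rpow (abs_nonneg _) (abs_nonneg _)]
  rw [lpErr, lpErr, interp_const_mul hm hT hc v]
  simp only [hmul]
  rw [integral_const_mul, Real.mul_rpow (by positivity) (integral_nonneg fun _ => by positivity),
    ← Real.rpow_mul (abs_nonneg c), mul_one_div_cancel hp, Real.rpow_one]

open Pointwise in
theorem Kfun_const_mul {m : ℕ} (hm : 2 ≤ m) {p : ℝ} (hp : p ≠ 0) {c : ℝ} (hc : c ≠ 0)
    (v : ℝ × ℝ → ℝ) : Kfun m p (fun z => c * v z) = |c| * Kfun m p v := by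
  have herr : ∀ T, triArea T = 1 → lpErr m p T (fun z => c * v z) = |c| * lpErr m p T v :=
    fun T hT => lpErr_const_mul hm hp (by simp [hT]) hc v
  have hset : { e | ∃ T, triArea T = 1 ∧ e = lpErr m p T (fun z => c * v z) } =
      |c| • { e | ∃ T, triArea T = 1 ∧ e = lpErr m p T v } := by
    ext e
    simp only [Set.mem_smul_set, Set.mem_ofPred_eq, smul_eq_mul]
    constructor
    · rintro ⟨T, hT, rfl⟩
      exact ⟨_, ⟨T, hT, rfl⟩, (herr T hT).symm⟩
    · rintro ⟨_, ⟨T, hT, rfl⟩, rfl⟩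
      exact ⟨T, hT, (herr T hT).symm⟩
  rw [Kfun, Kfun, hset, Real.sInf_smul_of_nonneg (abs_nonneg c), smul_eq_mul]

theorem Kfun_comp_linearEquiv {m : ℕ} (hm : 2 ≤ m) (p : ℝ) (Ψ : (ℝ × ℝ) ≃ₗ[ℝ] ℝ × ℝ)
    (hΨ : |LinearMap.det (Ψ : (ℝ × ℝ) →ₗ[ℝ] ℝ × ℝ)| = 1) (v : ℝ × ℝ → ℝ) :
    Kfun m p (fun z => v (Ψ z)) = Kfun m p v := by
  have harea : ∀ T, triArea (fun i => Ψ (T i)) = triArea T := fun T => by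
    simpa [hΨ] using triArea_comp (Ψ : (ℝ × ℝ) →ₗ[ℝ] ℝ × ℝ) T
  have herr : ∀ T, triArea T = 1 →
      lpErr m p T (fun z => v (Ψ z)) = lpErr m p (fun i => Ψ (T i)) v := fun T hT => by
    rw [lpErr_comp_linearEquiv hm (T := T) (by simp [hT]) Ψ v, hΨ]
    simp
  rw [Kfun, Kfun]
  congr 1
  ext e
  constructor
  · rintro ⟨T, hT, rfl⟩
    exact ⟨_, (harea T).trans hT, herr T hT⟩
  · rintro ⟨T, hT, rfl⟩
    have hT' : triArea (fun i => Ψ.symm (T i)) = 1 := by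
      simpa [hT] using (harea fun i => Ψ.symm (T i)).symm
    exact ⟨_, hT', by simpa using (herr _ hT').symm⟩

theorem IsForm.map_smul {m : ℕ} {π : ℝ × ℝ → ℝ} (hπ : IsForm m π) (t : ℝ) (z : ℝ × ℝ) :
    π (t • z) = t ^ m * π z := by
  obtain ⟨a, ha⟩ := hπ
  rw [ha, ha, formEval, formEval, Finset.mul_sum]
  refine Finset.sum_congr rfl fun i _ => ?_
  have ht : t ^ m = t ^ (i : ℕ) * t ^ (m - i) := by rw [← pow_add, Nat.add_sub_cancel' i.is_le]
  simp only [Prod.smul_fst, Prod.smul_snd, smul_eq_mul, mul_pow, ht]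
  ring

/-- the shape function K_{m,p}(π) = inf_{|T|=1} ‖π − I_Tπ‖_{L^p(T)} satisfies
K_{m,p}(π∘φ) = |det φ|^{m/2} K_{m,p}(π) for every invertible linear map φ. -/
theorem stmt12 (m : ℕ) (hm : 2 ≤ m) (p : ℝ) (hp : 1 ≤ p)
    (π : ℝ × ℝ → ℝ) (hπ : IsForm m π) (φ : (ℝ × ℝ) ≃ₗ[ℝ] (ℝ × ℝ)) :
    Kfun m p (fun z => π (φ z)) =
      |LinearMap.det (φ : (ℝ × ℝ) →ₗ[ℝ] (ℝ × ℝ))| ^ ((m : ℝ) / 2) * Kfun m p π := by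
  set D := |LinearMap.det (φ : (ℝ × ℝ) →ₗ[ℝ] (ℝ × ℝ))|
  have hD : 0 < D := abs_pos.mpr φ.isUnit_det'.ne_zero
  have hr : 0 < √D := Real.sqrt_pos.mpr hD
  let ψ : (ℝ × ℝ) ≃ₗ[ℝ] ℝ × ℝ := φ.trans (LinearEquiv.smulOfNeZero ℝ _ (√D)⁻¹ (inv_ne_zero hr.ne'))
  have hψ : |LinearMap.det (ψ : (ℝ × ℝ) →ₗ[ℝ] ℝ × ℝ)| = 1 := by
    have : (ψ : (ℝ × ℝ) →ₗ[ℝ] ℝ × ℝ) = (√D)⁻¹ • (φ : (ℝ × ℝ) →ₗ[ℝ] ℝ × ℝ) := by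
      ext <;> simp [ψ]
    rw [this, LinearMap.det_smul, abs_mul]
    simp [D, hD.ne']
  have hπφ : (fun z => π (φ z)) = fun z => √D ^ m * π (ψ z) := by
    funext z
    rw [← hπ.map_smul]
    simp [ψ, smul_smul, hr.ne']
  have hp0 : p ≠ 0 := (zero_lt_one.trans_le hp).ne'
  rw [hπφ, Kfun_const_mul hm hp0 (pow_ne_zero m hr.ne'), Kfun_comp_linearEquiv hm p ψ hψ,
    abs_of_pos (pow_pos hr m), Real.sqrt_eq_rpow, ← Real.rpow_natCast, ← Real.rpow_mul hD.le]
  ring_nf
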